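/- arXiv:1710.01220 — 3 statements merged into one kernel-verified Lean document; each statement's English description precedes it below -/
import Mathlib

section
/- Let a₀, b₀, c₀ and a₁, b₁, c₁ be real numbers with aᵢ² + bᵢcᵢ < 0 for i = 0, 1, let Aᵢ = [[aᵢ, bᵢ], [cᵢ, -aᵢ]] and ωᵢ = √(-(aᵢ² + bᵢcᵢ)). Then the supremum over all s, t ≥ 0 of |Tr(exp(sA₀)·exp(tA₁))| equals max(2, |Tr(A₀A₁)|/(ω₀ω₁)); that is, |Tr(exp(sA₀)·exp(tA₁))| ≤ max(2, |Tr(A₀A₁)|/(ω₀ω₁)) for all s, t ≥ 0, and this bound is attained for some s, t ≥ 0. -/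
/-!
A trace-zero real `2 × 2` matrix `A` with `det A = ω² > 0` satisfies `A² = -ω²`, so `ω⁻¹ A` behaves
like `i` and `exp (sA) = cos (ωs) + (sin (ωs) / ω) A`. Since the `Aᵢ` are traceless,
`Tr (exp (sA₀) exp (tA₁)) = 2 cos (ω₀s) cos (ω₁t) + T sin (ω₀s) sin (ω₁t)` with
`T = Tr (A₀A₁) / (ω₀ω₁)`. As `|cos x cos y| + |sin x sin y| ≤ 1`, this is at most `max 2 |T|`
in absolute value, and the two values are attained at `s = t = 0` and at `ωᵢ sᵢ = π / 2`.
-/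

open NormedSpace

section EulerFormula

variable {𝔸 : Type*} [NormedRing 𝔸] [NormedAlgebra ℝ 𝔸]

/- `Complex.liftAux J` is a continuous `ℝ`-algebra map `ℂ → 𝔸` sending `I` to `J`, so it carries
`exp (θ I) = cos θ + sin θ I` to `exp (θ • J)`. -/
theorem NormedSpace.exp_smul_of_mul_self_eq_neg_one {J : 𝔸} (hJ : J * J = -1) (θ : ℝ) :
    exp (θ • J) = Real.cos θ • 1 + Real.sin θ • J := by
  let _ : Algebra ℚ 𝔸 := RestrictScalars.algebra ℚ ℝ 𝔸
  let φ := Complex.liftAux J hJ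
  have hφ : Continuous φ := φ.toLinearMap.continuous_of_finiteDimensional
  have hθJ : θ • J = φ (θ * Complex.I) := by simp [φ, Complex.liftAux_apply]
  rw [hθJ, ← map_exp φ hφ, ← Complex.exp_eq_exp_ℂ, Complex.liftAux_apply,
    Complex.exp_ofReal_mul_I_re, Complex.exp_ofReal_mul_I_im, Algebra.algebraMap_eq_smul_one]

theorem NormedSpace.exp_smul_of_mul_self_eq_neg_sq_smul_one {A : 𝔸} {ω : ℝ} (hω : ω ≠ 0)
    (hA : A * A = -(ω ^ 2) • 1) (s : ℝ) :
    exp (s • A) = Real.cos (ω * s) • 1 + (Real.sin (ω * s) / ω) • A := by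
  have hJ : (ω⁻¹ • A) * (ω⁻¹ • A) = -1 := by
    rw [smul_mul_smul_comm, hA, smul_smul]
    field_simp
    simp
  have hsA : s • A = (ω * s) • (ω⁻¹ • A) := by
    rw [smul_smul]
    field_simp
  rw [hsA, exp_smul_of_mul_self_eq_neg_one hJ, smul_smul, div_eq_mul_inv]

end EulerFormula

namespace Matrix

variable {n : Type*} [Fintype n] [DecidableEq n]

-- `exp` does not depend on the norm, so any submultiplicative norm gives the Banach-algebra lemma.
theorem exp_smul_of_mul_self_eq_neg_sq_smul_one {A : Matrix n n ℝ} {ω : ℝ} (hω : ω ≠ 0)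
    (hA : A * A = -(ω ^ 2) • 1) (s : ℝ) :
    exp (s • A) = Real.cos (ω * s) • 1 + (Real.sin (ω * s) / ω) • A :=
  open scoped Norms.Operator in NormedSpace.exp_smul_of_mul_self_eq_neg_sq_smul_one hω hA s

theorem traceless_fin_two_mul_self {R : Type*} [CommRing R] (a b c : R) :
    !![a, b; c, -a] * !![a, b; c, -a] = (a ^ 2 + b * c) • (1 : Matrix (Fin 2) (Fin 2) R) := by
  ext i j
  fin_cases i <;> fin_cases j <;> simp <;> ring

theorem trace_smul_one_add_smul_mul_smul_one_add_smul {R : Type*} [CommRing R]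
    {A B : Matrix n n R} (hA : A.trace = 0) (hB : B.trace = 0) (c d c' d' : R) :
    ((c • 1 + d • A) * (c' • 1 + d' • B)).trace =
      Fintype.card n * (c * c') + d * d' * (A * B).trace := by
  simp only [mul_add, add_mul, Algebra.mul_smul_comm, Algebra.smul_mul_assoc, mul_one, one_mul,
    trace_add, trace_smul, trace_one, smul_eq_mul, hA, hB, mul_zero, add_zero]
  ring

theorem trace_exp_smul_mul_exp_smul_of_mul_self_eq_neg_sq_smul_one {A B : Matrix n n ℝ}
    {ω ν : ℝ} (hω : ω ≠ 0) (hν : ν ≠ 0) (hA : A * A = -(ω ^ 2) • 1) (hB : B * B = -(ν ^ 2) • 1)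
    (hAtr : A.trace = 0) (hBtr : B.trace = 0) (s t : ℝ) :
    (exp (s • A) * exp (t • B)).trace =
      Fintype.card n * (Real.cos (ω * s) * Real.cos (ν * t)) +
        (A * B).trace / (ω * ν) * (Real.sin (ω * s) * Real.sin (ν * t)) := by
  rw [exp_smul_of_mul_self_eq_neg_sq_smul_one hω hA,
    exp_smul_of_mul_self_eq_neg_sq_smul_one hν hB,
    trace_smul_one_add_smul_mul_smul_one_add_smul hAtr hBtr]
  field_simp

end Matrix

theorem abs_mul_add_mul_le_max {α β p q : ℝ} (h : |p| + |q| ≤ 1) :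
    |α * p + β * q| ≤ max |α| |β| := by
  calc |α * p + β * q| ≤ |α| * |p| + |β| * |q| := by
        simpa only [abs_mul] using abs_add_le (α * p) (β * q)
    _ ≤ max |α| |β| * |p| + max |α| |β| * |q| := by
        gcongr
        exacts [le_max_left _ _, le_max_right _ _]
    _ ≤ max |α| |β| := by
        nlinarith [abs_nonneg α, le_max_left |α| |β|]

-- Cauchy–Schwarz for the unit vectors `(|cos x|, |sin x|)` and `(|cos y|, |sin y|)`.
theorem Real.abs_cos_mul_cos_add_abs_sin_mul_sin_le_one (x y : ℝ) :
    |cos x * cos y| + |sin x * sin y| ≤ 1 := by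
  rw [abs_mul, abs_mul]
  nlinarith [sq_nonneg (|cos x| * |sin y| - |sin x| * |cos y|), sq_abs (cos x), sq_abs (cos y),
    sq_abs (sin x), sq_abs (sin y), sin_sq_add_cos_sq x, sin_sq_add_cos_sq y,
    abs_nonneg (cos x), abs_nonneg (cos y), abs_nonneg (sin x), abs_nonneg (sin y)]

/-- For `Aᵢ = !![aᵢ, bᵢ; cᵢ, -aᵢ]` with `aᵢ² + bᵢcᵢ < 0` and
`ωᵢ = √(-(aᵢ² + bᵢcᵢ))`, the supremum over `s, t ≥ 0` of
`|Tr(exp(sA₀)·exp(tA₁))|` equals `max 2 (|Tr(A₀A₁)| / (ω₀ω₁))`: the bound holds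
for all `s, t ≥ 0` and is attained for some `s, t ≥ 0`. -/
theorem sup_abs_trace_exp_mul_exp
    (a₀ b₀ c₀ a₁ b₁ c₁ : ℝ)
    (h₀ : a₀ ^ 2 + b₀ * c₀ < 0) (h₁ : a₁ ^ 2 + b₁ * c₁ < 0)
    (A₀ A₁ : Matrix (Fin 2) (Fin 2) ℝ)
    (hA₀ : A₀ = !![a₀, b₀; c₀, -a₀]) (hA₁ : A₁ = !![a₁, b₁; c₁, -a₁])
    (ω₀ ω₁ : ℝ)
    (hω₀ : ω₀ = Real.sqrt (-(a₀ ^ 2 + b₀ * c₀)))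
    (hω₁ : ω₁ = Real.sqrt (-(a₁ ^ 2 + b₁ * c₁))) :
    (∀ s t : ℝ, 0 ≤ s → 0 ≤ t →
      |(NormedSpace.exp (s • A₀) * NormedSpace.exp (t • A₁)).trace| ≤
        max 2 (|(A₀ * A₁).trace| / (ω₀ * ω₁))) ∧
    ∃ s t : ℝ, 0 ≤ s ∧ 0 ≤ t ∧
      |(NormedSpace.exp (s • A₀) * NormedSpace.exp (t • A₁)).trace| =
        max 2 (|(A₀ * A₁).trace| / (ω₀ * ω₁)) := by
  have hω₀pos : 0 < ω₀ := hω₀ ▸ Real.sqrt_pos.mpr (neg_pos.mpr h₀)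
  have hω₁pos : 0 < ω₁ := hω₁ ▸ Real.sqrt_pos.mpr (neg_pos.mpr h₁)
  have hsq₀ : A₀ * A₀ = -(ω₀ ^ 2) • 1 := by
    rw [hA₀, hω₀, Real.sq_sqrt (neg_nonneg.mpr h₀.le), neg_neg,
      Matrix.traceless_fin_two_mul_self]
  have hsq₁ : A₁ * A₁ = -(ω₁ ^ 2) • 1 := by
    rw [hA₁, hω₁, Real.sq_sqrt (neg_nonneg.mpr h₁.le), neg_neg,
      Matrix.traceless_fin_two_mul_self]
  set T := (A₀ * A₁).trace / (ω₀ * ω₁)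
  have htrace (s t : ℝ) : (exp (s • A₀) * exp (t • A₁)).trace =
      2 * (Real.cos (ω₀ * s) * Real.cos (ω₁ * t)) +
        T * (Real.sin (ω₀ * s) * Real.sin (ω₁ * t)) := by
    simpa using Matrix.trace_exp_smul_mul_exp_smul_of_mul_self_eq_neg_sq_smul_one hω₀pos.ne'
      hω₁pos.ne' hsq₀ hsq₁ (by simp [hA₀]) (by simp [hA₁]) s t
  have habsT : |(A₀ * A₁).trace| / (ω₀ * ω₁) = |T| := by
    rw [abs_div, abs_of_pos (mul_pos hω₀pos hω₁pos)]
  rw [habsT]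
  refine ⟨fun s t _ _ => ?_, ?_⟩
  · rw [htrace]
    exact (abs_mul_add_mul_le_max (Real.abs_cos_mul_cos_add_abs_sin_mul_sin_le_one _ _)).trans_eq
      (by rw [abs_two])
  · rcases le_total |T| 2 with hle | hge
    · exact ⟨0, 0, le_rfl, le_rfl, by simp [max_eq_left hle]⟩
    · refine ⟨Real.pi / 2 / ω₀, Real.pi / 2 / ω₁, by positivity, by positivity, ?_⟩
      simp [htrace, mul_div_cancel₀ _ hω₀pos.ne', mul_div_cancel₀ _ hω₁pos.ne',
        max_eq_right hge]
end

section
/- Let ω₀ > 0, let A₀ = [[0, -ω₀], [ω₀, 0]], and let A₁ = [[a₁, b₁], [c₁, -a₁]] with a₁² + b₁c₁ < 0 and ω₁ = √(-(a₁² + b₁c₁)). If A₁ is not a scalar multiple of A₀, then |Tr(exp((π/(2ω₀))·A₀)·exp((π/(2ω₁))·A₁))| > 2. -/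
/-!
If `J * J = -1` then `exp (t • J) = cos t • 1 + sin t • J`, so `exp ((π / 2) • J) = J`.
A traceless `2 × 2` matrix `A` with `A * A = -ω² • 1` gives such a `J = ω⁻¹ • A`, and the two
exponentials are `J₀ = !![0, -1; 1, 0]` and `J₁ = ω₁⁻¹ • A₁`, with `Tr (J₀ * J₁) = (b₁ - c₁) / ω₁`.
Finally `(b₁ - c₁)² - 4 ω₁² = 4 a₁² + (b₁ + c₁)²`, which vanishes exactly when `A₁` is a multiple
of `A₀`.
-/

open Real

section
variable {A : Type*} [Ring A] [Algebra ℝ A] [TopologicalSpace A] [IsTopologicalRing A]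
  [ContinuousSMul ℝ A] [T2Space A]

theorem NormedSpace.exp_smul_eq_cos_add_sin_smul_of_mul_self_eq_neg_one {J : A}
    (hJ : J * J = -1) (t : ℝ) :
    NormedSpace.exp (t • J) = cos t • (1 : A) + sin t • J := by
  have hpow : ∀ n : ℕ, (t • J) ^ (2 * n) = ((-1) ^ n * t ^ (2 * n)) • (1 : A) := fun n => by
    rw [smul_pow, pow_mul J, sq J, hJ, mul_smul, smul_comm, ← neg_one_smul ℝ (1 : A), smul_pow,
      one_pow]
  rw [NormedSpace.exp_eq_tsum ℝ]
  refine HasSum.tsum_eq (HasSum.even_add_odd ?_ ?_)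
  · convert (hasSum_cos t).smul_const (1 : A) using 2 with n
    rw [hpow, smul_smul, div_eq_inv_mul]
  · convert (hasSum_sin t).smul_const J using 2 with n
    rw [pow_succ, hpow, smul_mul_smul, one_mul, smul_smul]
    ring_nf

theorem NormedSpace.exp_pi_div_two_smul_of_mul_self_eq_neg_one {J : A} (hJ : J * J = -1) :
    NormedSpace.exp ((π / 2) • J) = J := by
  simp [exp_smul_eq_cos_add_sin_smul_of_mul_self_eq_neg_one hJ]

end

theorem Matrix.traceless_fin_two_mul_self_s7 {R : Type*} [CommRing R] (a b c : R) :
    !![a, b; c, -a] * !![a, b; c, -a] = (a ^ 2 + b * c) • (1 : Matrix (Fin 2) (Fin 2) R) := by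
  ext i j
  fin_cases i <;> fin_cases j <;> simp [Matrix.mul_apply, Fin.sum_univ_two] <;> ring

theorem Matrix.exp_pi_div_two_mul_smul_traceless_fin_two {a b c ω : ℝ} (hω : ω ≠ 0)
    (h : a ^ 2 + b * c = -ω ^ 2) :
    NormedSpace.exp ((π / (2 * ω)) • !![a, b; c, -a]) = ω⁻¹ • !![a, b; c, -a] := by
  have hJ : (ω⁻¹ • !![a, b; c, -a]) * (ω⁻¹ • !![a, b; c, -a]) = -1 := by
    rw [smul_mul_smul, traceless_fin_two_mul_self_s7, h, smul_smul,
      ← neg_one_smul ℝ (1 : Matrix _ _ ℝ)]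
    congr 1
    field_simp
  rw [← NormedSpace.exp_pi_div_two_smul_of_mul_self_eq_neg_one hJ, smul_smul]
  congr 2
  field_simp

theorem two_mul_sqrt_lt_abs_sub {a b c : ℝ} (h : a ^ 2 + b * c < 0) (hne : a ≠ 0 ∨ b + c ≠ 0) :
    2 * √(-(a ^ 2 + b * c)) < |b - c| := by
  have hpos : 0 < 4 * a ^ 2 + (b + c) ^ 2 := by
    rcases hne with ha | hbc <;> positivity
  refine lt_of_pow_lt_pow_left₀ 2 (abs_nonneg _) ?_
  rw [mul_pow, sq_sqrt (by linarith), sq_abs]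
  linarith

open Real in
/-- For `A₀ = !![0, -ω₀; ω₀, 0]` with `ω₀ > 0` and
`A₁ = !![a₁, b₁; c₁, -a₁]` with `a₁² + b₁c₁ < 0`, `ω₁ = √(-(a₁² + b₁c₁))`:
if `A₁` is not a scalar multiple of `A₀`, then
`|Tr(exp((π/(2ω₀)) • A₀) · exp((π/(2ω₁)) • A₁))| > 2`. -/
theorem abs_trace_exp_gt_two_of_non_proportional
    (ω₀ : ℝ) (hω₀ : 0 < ω₀)
    (A₀ : Matrix (Fin 2) (Fin 2) ℝ) (hA₀ : A₀ = !![0, -ω₀; ω₀, 0])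
    (a₁ b₁ c₁ : ℝ) (h₁ : a₁ ^ 2 + b₁ * c₁ < 0)
    (A₁ : Matrix (Fin 2) (Fin 2) ℝ) (hA₁ : A₁ = !![a₁, b₁; c₁, -a₁])
    (ω₁ : ℝ) (hω₁ : ω₁ = Real.sqrt (-(a₁ ^ 2 + b₁ * c₁)))
    (hprop : ¬∃ γ : ℝ, A₁ = γ • A₀) :
    |(NormedSpace.exp ((π / (2 * ω₀)) • A₀) *
        NormedSpace.exp ((π / (2 * ω₁)) • A₁)).trace| > 2 := by
  have hω₁pos : 0 < ω₁ := hω₁ ▸ sqrt_pos.mpr (neg_pos.mpr h₁)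
  have hA₀' : A₀ = !![0, -ω₀; ω₀, -0] := by rw [hA₀, neg_zero]
  have exp₀ := Matrix.exp_pi_div_two_mul_smul_traceless_fin_two (a := 0) (b := -ω₀) (c := ω₀)
    hω₀.ne' (by ring)
  have exp₁ := Matrix.exp_pi_div_two_mul_smul_traceless_fin_two (a := a₁) (b := b₁) (c := c₁)
    hω₁pos.ne' (by rw [hω₁, sq_sqrt (neg_pos.mpr h₁).le, neg_neg])
  rw [hA₀', hA₁, exp₀, exp₁]
  have htrace : (ω₀⁻¹ • !![0, -ω₀; ω₀, -0] * ω₁⁻¹ • !![a₁, b₁; c₁, -a₁]).trace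
      = (b₁ - c₁) / ω₁ := by
    simp [Matrix.trace_fin_two]
    field_simp
    ring
  have hne : a₁ ≠ 0 ∨ b₁ + c₁ ≠ 0 := by
    by_contra! h
    refine hprop ⟨-b₁ / ω₀, ?_⟩
    obtain ⟨rfl, hc⟩ := h
    rw [hA₁, hA₀, eq_neg_of_add_eq_zero_right hc]
    ext i j
    fin_cases i <;> fin_cases j <;> simp <;> field_simp
  rw [htrace, abs_div, abs_of_pos hω₁pos, gt_iff_lt, lt_div_iff₀ hω₁pos, hω₁]
  exact two_mul_sqrt_lt_abs_sub h₁ hne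
end

section
/- Let A be a real 2×2 matrix having no real eigenvalue. Then there is no nonempty finite set S of one-dimensional linear subspaces of ℝ² such that for every t ≥ 0 and every subspace L ∈ S, the image of L under the matrix exponential exp(tA) again belongs to S. -/
/-!
Take `v ≠ 0` on a line of `S`. For `t > 0` the vector `exp (t • A) *ᵥ v` lies on one of the
finitely many lines of `S`, so a single line `M` contains it for arbitrarily small `t > 0`.
Being closed, `M` contains the limit `v` and the limit `A *ᵥ v` of the difference quotients;
since `M` is a line, `v` is a real eigenvector of `A`.
-/

open NormedSpace Filter Topology Set Matrix

theorem Matrix.hasDerivAt_exp_smul_mulVec {n : Type*} [Fintype n] [DecidableEq n]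
    (A : Matrix n n ℝ) (v : n → ℝ) (t : ℝ) :
    HasDerivAt (fun s : ℝ => exp (s • A) *ᵥ v) ((exp (t • A) * A) *ᵥ v) t := by
  -- `exp` depends only on the topology, so any normed-algebra structure on matrices will do.
  let := Matrix.linftyOpNormedRing (n := n) (α := ℝ)
  let := Matrix.linftyOpNormedAlgebra (n := n) (R := ℝ) (α := ℝ)
  exact ((mulVecBilin ℝ ℝ).flip v).toContinuousLinearMap.hasFDerivAt.comp_hasDerivAt t
    (hasDerivAt_exp_smul_const A t)

theorem Submodule.value_mem_and_deriv_mem_of_frequently_mem {E : Type*}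
    [NormedAddCommGroup E] [NormedSpace ℝ E] {M : Submodule ℝ E} (hM : IsClosed (M : Set E))
    {f : ℝ → E} {f' : E} {s : Set ℝ} {x : ℝ} (hf : HasDerivWithinAt f f' s x) (hx : x ∉ s)
    (hfreq : ∃ᶠ t in 𝓝[s] x, f t ∈ M) : f x ∈ M ∧ f' ∈ M := by
  have hfx : f x ∈ M := hM.mem_of_frequently_of_tendsto hfreq <| by
    simpa using hf.continuousWithinAt.tendsto
  refine ⟨hfx, hM.mem_of_frequently_of_tendsto ?_ ((hasDerivWithinAt_iff_tendsto_slope' hx).mp hf)⟩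
  exact hfreq.mono fun t ht => M.smul_mem _ (M.sub_mem ht hfx)

theorem Matrix.det_sub_smul_one_eq_zero_of_mulVec_eq_smul {n K : Type*} [Fintype n]
    [DecidableEq n] [Field K] {A : Matrix n n K} {v : n → K} (hv : v ≠ 0) {c : K}
    (h : A *ᵥ v = c • v) :
    (A - c • (1 : Matrix n n K)).det = 0 :=
  exists_mulVec_eq_zero_iff.mp ⟨v, hv, by rw [sub_mulVec, h, smul_mulVec, one_mulVec, sub_self]⟩

theorem Submodule.exists_smul_eq_of_finrank_eq_one {K V : Type*} [DivisionRing K]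
    [AddCommGroup V] [Module K V] {M : Submodule K V} (hM : Module.finrank K M = 1) {v w : V}
    (hv : v ∈ M) (hv0 : v ≠ 0) (hw : w ∈ M) : ∃ c : K, w = c • v := by
  obtain ⟨c, hc⟩ :=
    (finrank_eq_one_iff_of_nonzero' (⟨v, hv⟩ : M) (by simpa using hv0)).mp hM ⟨w, hw⟩
  exact ⟨c, congrArg Subtype.val hc.symm⟩

/-- If a real `2×2` matrix `A` has no real eigenvalue, then there is
no nonempty finite set of one-dimensional subspaces of `ℝ²` that is invariant under
the exponentials `exp (t • A)` for all `t ≥ 0`. -/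
theorem no_finite_invariant_union_of_lines
    (A : Matrix (Fin 2) (Fin 2) ℝ)
    (h : ∀ l : ℝ, (A - l • (1 : Matrix (Fin 2) (Fin 2) ℝ)).det ≠ 0) :
    ¬∃ S : Finset (Submodule ℝ (Fin 2 → ℝ)), S.Nonempty ∧
      (∀ L ∈ S, Module.finrank ℝ L = 1) ∧
      (∀ t : ℝ, 0 ≤ t → ∀ L ∈ S,
        Submodule.map (Matrix.mulVecLin (NormedSpace.exp (t • A))) L ∈ S) := by
  rintro ⟨S, ⟨L, hL⟩, hdim, hinv⟩
  obtain ⟨v, hv, hv0⟩ := L.exists_mem_ne_zero_of_ne_bot <| by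
    rw [Ne, ← Submodule.finrank_eq_zero, hdim L hL]; exact one_ne_zero
  have hvisit : ∀ᶠ t in 𝓝[>] (0 : ℝ), ∃ M ∈ S, exp (t • A) *ᵥ v ∈ M :=
    eventually_mem_nhdsWithin.mono fun t ht =>
      ⟨_, hinv t (le_of_lt ht) L hL, Submodule.mem_map_of_mem hv⟩
  obtain ⟨M, hM, hfreq⟩ := S.frequently_exists.mp hvisit.frequently
  have hderiv : HasDerivWithinAt (fun t : ℝ => exp (t • A) *ᵥ v) (A *ᵥ v) (Ioi 0) 0 := by
    simpa using (hasDerivAt_exp_smul_mulVec A v 0).hasDerivWithinAt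
  obtain ⟨hvM, hAvM⟩ := M.value_mem_and_deriv_mem_of_frequently_mem
    M.closed_of_finiteDimensional hderiv self_notMem_Ioi hfreq
  obtain ⟨c, hc⟩ := Submodule.exists_smul_eq_of_finrank_eq_one (hdim M hM)
    (by simpa using hvM) hv0 hAvM
  exact h c (det_sub_smul_one_eq_zero_of_mulVec_eq_smul hv0 hc)
end
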